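/- Let q ≥ 5 be a prime, let n ≥ 1 be an integer, and set d = qⁿ + 1. Let K be an algebraic closure of the finite field F_q, and let K(t) be the rational function field over K (RatFunc K). Then the cubic polynomial 4X³ + X² − 4t^d ∈ K(t)[X] has no root in K(t); consequently, being of degree 3, it is irreducible over K(t). -/
import Mathlib


open Polynomial

/-- Geometric irreducibility of the trigonal curve `C_{2,n}` parametrizing the `2`-torsion of
Ulmer's elliptic curve `E_n : y² + xy = x³ + t^d` (`d = qⁿ + 1`) over `F_q(t)`: over an
algebraic closure `K` of `F_q`, the cubic `4X³ + X² − 4t^d` has no root in `K(t)`, and hence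
is irreducible over `K(t)`. -/
theorem ulmer_two_torsion_cubic_no_root_and_irreducible
    (q : ℕ) [Fact (Nat.Prime q)] (hq : 5 ≤ q) (n : ℕ) (hn : 1 ≤ n) :
    (∀ x : RatFunc (AlgebraicClosure (ZMod q)),
      Polynomial.eval x
        (C 4 * X ^ 3 + X ^ 2
          - C (4 * (RatFunc.X : RatFunc (AlgebraicClosure (ZMod q))) ^ (q ^ n + 1))) ≠ 0) ∧
    Irreducible
      (C 4 * X ^ 3 + X ^ 2
        - C (4 * (RatFunc.X : RatFunc (AlgebraicClosure (ZMod q))) ^ (q ^ n + 1))) := by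
  set K := AlgebraicClosure (ZMod q) with hKdef
  set d := q ^ n + 1 with hddef
  have hdne : d ≠ 0 := by omega
  -- 4 ≠ 0 in K
  have h4K : (4 : K) ≠ 0 := by
    intro h
    have h' : ((4 : ℕ) : K) = 0 := by exact_mod_cast h
    have := (CharP.cast_eq_zero_iff K q 4).mp h'
    have := Nat.le_of_dvd (by norm_num) this
    omega
  have h4C : (4 : K[X]) = C (4 : K) := (map_ofNat (Polynomial.C : K →+* K[X]) 4).symm
  have h4u : IsUnit (4 : K[X]) := by rw [h4C]; exact isUnit_C.mpr h4K.isUnit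
  have h4F : (4 : RatFunc K) ≠ 0 := by
    intro h
    exact h4K ((algebraMap K (RatFunc K)).injective (by rw [map_ofNat, map_zero]; exact h))
  have key : ∀ x : RatFunc K,
      Polynomial.eval x (C 4 * X ^ 3 + X ^ 2
        - C (4 * (RatFunc.X : RatFunc K) ^ d)) ≠ 0 := by
    intro x hx
    simp only [eval_sub, eval_add, eval_mul, eval_pow, eval_C, eval_X] at hx
    -- hx : 4 * x ^ 3 + x ^ 2 - 4 * RatFunc.X ^ d = 0
    -- x is integral over K[X]
    have hint : IsIntegral (Polynomial K) x := by
      refine ⟨X ^ 3 + (C (C (4⁻¹ : K)) * X ^ 2 - C ((X : Polynomial K) ^ d)), ?_, ?_⟩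
      · apply monic_X_pow_add
        refine lt_of_le_of_lt ((degree_sub_le _ _).trans ?_) (by norm_num : (2 : WithBot ℕ) < 3)
        simp only [max_le_iff]
        constructor
        · calc degree (C (C (4⁻¹:K)) * X ^ 2) ≤ degree (C (C (4⁻¹:K))) + degree ((X:Polynomial K[X]) ^ 2) :=
              degree_mul_le _ _
          _ ≤ 0 + 2 := by
              refine add_le_add degree_C_le ?_
              rw [degree_X_pow]
              exact_mod_cast le_rfl
          _ = 2 := by norm_num
        · exact (degree_C_le).trans (by norm_num)
      · rw [← aeval_def]
        have h4i : (RatFunc.C (4 : K)) = 4 := map_ofNat _ 4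
        simp only [map_add, map_sub, map_mul, map_pow, aeval_X, aeval_C,
          RatFunc.algebraMap_C, RatFunc.algebraMap_X, map_inv₀, h4i]
        have h44 : (4 : RatFunc K) * (4 : RatFunc K)⁻¹ = 1 := mul_inv_cancel₀ h4F
        linear_combination (4⁻¹ : RatFunc K) * hx - (x ^ 3 - RatFunc.X ^ d) * h44
    obtain ⟨p, hp⟩ := IsIntegrallyClosed.isIntegral_iff.mp hint
    -- transfer the equation to K[X]
    have hR : p ^ 2 * (4 * p + 1) = 4 * X ^ d := by
      apply IsFractionRing.injective (Polynomial K) (RatFunc K)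
      have hXmap : algebraMap (Polynomial K) (RatFunc K) X = RatFunc.X :=
        RatFunc.algebraMap_X
      simp only [map_mul, map_add, map_pow, map_one, map_ofNat, hXmap, hp]
      linear_combination hx
    -- evaluate at 0
    have h0 : (eval 0 p) ^ 2 * (4 * eval 0 p + 1) = 0 := by
      have := congrArg (eval 0) hR
      simpa [zero_pow hdne] using this
    -- in either case, p is a constant
    have hconst : ∃ c : K, p = C c := by
      rcases mul_eq_zero.mp h0 with h1 | h2
      · -- eval 0 p = 0, so X does not divide 4p+1
        have hp0 : eval 0 p = 0 := by
          exact pow_eq_zero_iff (n := 2) (by norm_num) |>.mp h1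
        have hnd : ¬ (X : Polynomial K) ∣ (4 * p + 1) := by
          rw [X_dvd_iff]
          simp [coeff_zero_eq_eval_zero, hp0]
        have hcop : IsCoprime (X : Polynomial K) (4 * p + 1) :=
          (prime_X).coprime_iff_not_dvd.mpr hnd
        have hdvd : (4 * p + 1) ∣ (4 : Polynomial K) :=
          (hcop.symm.pow_right (n := d)).dvd_of_dvd_mul_right
            ⟨p ^ 2, by linear_combination -hR⟩
        have hu : IsUnit (4 * p + 1) := isUnit_of_dvd_unit hdvd h4u
        have hdeg1 : degree (4 * p + 1 : K[X]) = 0 := degree_eq_zero_of_isUnit hu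
        have hdp : degree p ≤ 0 := by
          have e : C (4:K) * p = (4 * p + 1) - 1 := by rw [← h4C]; ring
          calc degree p = degree (C (4:K) * p) := (degree_C_mul h4K).symm
            _ = degree ((4 * p + 1) - 1) := by rw [e]
            _ ≤ max (degree (4 * p + 1)) (degree (1 : K[X])) := degree_sub_le _ _
            _ ≤ 0 := by rw [hdeg1, degree_one]; simp
        exact ⟨p.coeff 0, eq_C_of_degree_le_zero hdp⟩
      · -- 4 * eval 0 p + 1 = 0, so X does not divide p
        have hp0 : eval 0 p ≠ 0 := by
          intro h
          rw [h] at h2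
          simp at h2
        have hnd : ¬ (X : Polynomial K) ∣ p := by
          rw [X_dvd_iff]
          simpa [coeff_zero_eq_eval_zero] using hp0
        have hcop : IsCoprime (X : Polynomial K) p :=
          (prime_X).coprime_iff_not_dvd.mpr hnd
        have hdvd : p ^ 2 ∣ (4 : Polynomial K) :=
          (hcop.symm.pow (m := 2) (n := d)).dvd_of_dvd_mul_right
            ⟨4 * p + 1, by linear_combination -hR⟩
        have hu : IsUnit p :=
          isUnit_of_dvd_unit ((dvd_pow_self p two_ne_zero).trans hdvd) h4u
        exact ⟨p.coeff 0, eq_C_of_degree_le_zero (degree_eq_zero_of_isUnit hu).le⟩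
    obtain ⟨c, rfl⟩ := hconst
    -- compare coefficients at degree d
    rw [h4C] at hR
    have hL : Polynomial.C (c ^ 2 * (4 * c + 1)) = (C c) ^ 2 * (C (4:K) * C c + 1) := by
      simp only [map_mul, map_add, map_pow, map_one]
    rw [← hL] at hR
    have hco := congrArg (fun f : K[X] => coeff f d) hR
    simp only [coeff_C, coeff_C_mul, coeff_X_pow] at hco
    rw [if_neg hdne] at hco
    simp only [if_true, eq_self_iff_true, mul_one] at hco
    exact h4K hco.symm
  refine ⟨key, ?_⟩
  have hdeg : (C 4 * X ^ 3 + X ^ 2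
      - C (4 * (RatFunc.X : RatFunc K) ^ d)).natDegree = 3 := by
    compute_degree!
  rw [irreducible_iff_roots_eq_zero_of_degree_le_three]
  · rw [Multiset.eq_zero_iff_forall_notMem]
    intro a ha
    exact key a ((mem_roots'.mp ha).2)
  · omega
  · omega
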